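/- Let m ≥ 2, let H ≤ Sym(m) be transitive, and let K be a closed subgroup of the iterated wreath product W_H. For G_K = ⟨H, D_m(K)⟩ one has St_{G_K}(1) = D_m(K) and, for every n ≥ 1, log|G_K : St_{G_K}(n)| = log|H| + log|K : St_K(n−1)|. Consequently hdim_{W_H}(G_K) = hdim_{W_H}(K)/m, and if K has strong Hausdorff dimension in W_H then so does G_K. -/

import Mathlib

open Filter Topology

/-- Vertices of the `m`-adic rooted tree: finite words over an alphabet of size `m`. -/
abbrev Vtx (m : ℕ) := List (Fin m)

/-- The iterated wreath product `W_H ≤ Aut T`: permutations `f` of the vertex set that fix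
the root and such that at every vertex `v` there is a local permutation `σ ∈ H` with
`f (v ++ [x]) = f v ++ [σ x]` for every letter `x`.  (This encodes exactly the automorphisms
of the `m`-adic tree whose local permutation at every vertex lies in `H`.) -/
def wreath (m : ℕ) (H : Subgroup (Equiv.Perm (Fin m))) : Subgroup (Equiv.Perm (Vtx m)) where
  carrier := {f | f [] = [] ∧
    ∀ v : Vtx m, ∃ σ ∈ H, ∀ x : Fin m, f (v ++ [x]) = f v ++ [σ x]}
  one_mem' := ⟨rfl, fun _ => ⟨1, H.one_mem, fun _ => rfl⟩⟩
  mul_mem' := by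
    rintro f g ⟨hf0, hf⟩ ⟨hg0, hg⟩
    refine ⟨?_, fun v => ?_⟩
    · show f (g []) = []
      rw [hg0, hf0]
    · obtain ⟨τ, hτ, hτ'⟩ := hg v
      obtain ⟨σ, hσ, hσ'⟩ := hf (g v)
      refine ⟨σ * τ, H.mul_mem hσ hτ, fun x => ?_⟩
      show f (g (v ++ [x])) = f (g v) ++ [σ (τ x)]
      rw [hτ' x, hσ' (τ x)]
  inv_mem' := by
    rintro f ⟨hf0, hf⟩
    refine ⟨?_, fun v => ?_⟩
    · calc (f⁻¹ : Equiv.Perm (Vtx m)) [] = f⁻¹ (f []) := by rw [hf0]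
        _ = [] := f.symm_apply_apply []
    · obtain ⟨σ, hσ, hσ'⟩ := hf (f⁻¹ v)
      refine ⟨σ⁻¹, H.inv_mem hσ, fun x => ?_⟩
      apply Equiv.injective f
      rw [show ∀ y, f (f⁻¹ y) = y from f.apply_symm_apply, hσ' (σ⁻¹ x),
        show ∀ y, f (f⁻¹ y) = y from f.apply_symm_apply,
        show ∀ y, σ (σ⁻¹ y) = y from σ.apply_symm_apply]

/-- The pointwise stabilizer (in the full permutation group of the vertex set)
of the vertices of the first `n` levels of the tree. -/
def levelStab (m n : ℕ) : Subgroup (Equiv.Perm (Vtx m)) :=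
  ⨅ v ∈ {v : Vtx m | v.length ≤ n}, MulAction.stabilizer (Equiv.Perm (Vtx m)) v

/-- The Hausdorff dimension of `X` in `G` with respect to the level-stabilizer filtration:
`hdimIn m G X = liminf_n log|X : St_X(n)| / log|G : St_G(n)|`. -/
noncomputable def hdimIn (m : ℕ) (G X : Subgroup (Equiv.Perm (Vtx m))) : ℝ :=
  Filter.liminf (fun n : ℕ =>
    Real.log ((levelStab m n).relIndex X) / Real.log ((levelStab m n).relIndex G)) Filter.atTop

/-- `X` has strong Hausdorff dimension `α` in `G` if the sequence
`log|X : St_X(n)| / log|G : St_G(n)|` converges to `α` (a proper limit). -/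
def hasStrongHdim (m : ℕ) (G X : Subgroup (Equiv.Perm (Vtx m))) (α : ℝ) : Prop :=
  Filter.Tendsto (fun n : ℕ =>
    Real.log ((levelStab m n).relIndex X) / Real.log ((levelStab m n).relIndex G))
    Filter.atTop (nhds α)

/-- The closure of a subgroup of `Aut T` in the profinite (congruence) topology:
`cl(G) = ⋂_n G · St(n)`. -/
def treeClosure (m : ℕ) (G : Subgroup (Equiv.Perm (Vtx m))) : Subgroup (Equiv.Perm (Vtx m)) :=
  ⨅ n : ℕ, G ⊔ levelStab m n

/-- A subgroup of `Aut T` is closed (in the profinite topology) iff it equals its closure. -/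
def IsTreeClosed (m : ℕ) (G : Subgroup (Equiv.Perm (Vtx m))) : Prop :=
  treeClosure m G = G

/-- `G` acts transitively on every level of the tree. -/
def LevelTransitive (m : ℕ) (G : Subgroup (Equiv.Perm (Vtx m))) : Prop :=
  ∀ u v : Vtx m, u.length = v.length → ∃ g ∈ G, g u = v

/-- `G` is self-similar: the section of any `g ∈ G` at any vertex `v` again belongs to `G`,
i.e. there is `h ∈ G` with `g (v ++ u) = g v ++ h u` for all words `u`. -/
def SelfSimilar (m : ℕ) (G : Subgroup (Equiv.Perm (Vtx m))) : Prop :=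
  ∀ g ∈ G, ∀ v : Vtx m, ∃ h ∈ G, ∀ u : Vtx m, g (v ++ u) = g v ++ h u

/-- The rigid vertex stabilizer of `v` in `G`: elements of `G` fixing `v` and every vertex
outside the subtree rooted at `v`. -/
def rist (m : ℕ) (G : Subgroup (Equiv.Perm (Vtx m))) (v : Vtx m) :
    Subgroup (Equiv.Perm (Vtx m)) :=
  G ⊓ ⨅ u ∈ {u : Vtx m | u = v ∨ ¬ v <+: u}, MulAction.stabilizer (Equiv.Perm (Vtx m)) u

/-- The rigid level stabilizer `Rist_G(n)`: the (internal direct) product of the rigid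
vertex stabilizers of the vertices at level `n`, i.e. the subgroup they generate. -/
def RistL (m : ℕ) (G : Subgroup (Equiv.Perm (Vtx m))) (n : ℕ) :
    Subgroup (Equiv.Perm (Vtx m)) :=
  ⨆ v ∈ {v : Vtx m | v.length = n}, rist m G v

/-- `N` is a normal subgroup of `G` (both given as subgroups of an ambient group). -/
def NormalIn {X : Type*} [Group X] (N G : Subgroup X) : Prop :=
  N ≤ G ∧ ∀ g ∈ G, ∀ x ∈ N, g * x * g⁻¹ ∈ N

/-- The rooted automorphism associated to `σ`: it permutes the first letter by `σ` and is
trivial elsewhere. -/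
def rootedPerm (m : ℕ) (σ : Equiv.Perm (Fin m)) : Equiv.Perm (Vtx m) where
  toFun v := match v with
    | [] => []
    | x :: w => σ x :: w
  invFun v := match v with
    | [] => []
    | x :: w => σ⁻¹ x :: w
  left_inv v := by cases v with
    | nil => rfl
    | cons x w => simp
  right_inv v := by cases v with
    | nil => rfl
    | cons x w => simp

/-- The embedding `H → W_H` by rooted automorphisms, as a group homomorphism. -/
def rootedHom (m : ℕ) : Equiv.Perm (Fin m) →* Equiv.Perm (Vtx m) where
  toFun := rootedPerm m
  map_one' := by
    ext v
    cases v <;> rfl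
  map_mul' σ τ := by
    ext v
    cases v <;> rfl

/-- `D_m(K)`: the preimage under the first-level section map `ψ` of the diagonal copy
`{(k,…,k) : k ∈ K}`, i.e. those `f` fixing the first level whose section at every
first-level vertex is one and the same element `k ∈ K`. -/
def diagSub (m : ℕ) (K : Subgroup (Equiv.Perm (Vtx m))) : Subgroup (Equiv.Perm (Vtx m)) where
  carrier := {f | f [] = [] ∧ ∃ k ∈ K, ∀ (x : Fin m) (u : Vtx m), f (x :: u) = x :: k u}
  one_mem' := ⟨rfl, 1, K.one_mem, fun _ _ => rfl⟩
  mul_mem' := by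
    rintro f g ⟨hf0, kf, hkf, hf⟩ ⟨hg0, kg, hkg, hg⟩
    refine ⟨?_, kf * kg, K.mul_mem hkf hkg, fun x u => ?_⟩
    · show f (g []) = []
      rw [hg0, hf0]
    · show f (g (x :: u)) = x :: kf (kg u)
      rw [hg x u, hf x (kg u)]
  inv_mem' := by
    rintro f ⟨hf0, k, hk, hf⟩
    refine ⟨?_, k⁻¹, K.inv_mem hk, fun x u => ?_⟩
    · calc (f⁻¹ : Equiv.Perm (Vtx m)) [] = f⁻¹ (f []) := by rw [hf0]
        _ = [] := f.symm_apply_apply []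
    · apply Equiv.injective f
      rw [show ∀ y, f (f⁻¹ y) = y from f.apply_symm_apply, hf x (k⁻¹ u),
        show ∀ y, k (k⁻¹ y) = y from k.apply_symm_apply]

/-- The group `G_K = ⟨H, D_m(K)⟩`, where `H` acts by rooted automorphisms. -/
def diagGroup (m : ℕ) (H : Subgroup (Equiv.Perm (Fin m))) (K : Subgroup (Equiv.Perm (Vtx m))) :
    Subgroup (Equiv.Perm (Vtx m)) :=
  H.map (rootedHom m) ⊔ diagSub m K

/-- The center of a subgroup `G` of an ambient group, as a subgroup of the ambient group. -/
def centerOf {X : Type*} [Group X] (G : Subgroup X) : Subgroup X :=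
  Subgroup.centralizer (G : Set X) ⊓ G

/-- The `G`-orbit of a vertex `v`. -/
def orbitSet (m : ℕ) (G : Subgroup (Equiv.Perm (Vtx m))) (v : Vtx m) : Set (Vtx m) :=
  {w | ∃ g ∈ G, g v = w}

/-- The number of `G`-orbits on the `n`-th level of the tree. -/
noncomputable def numOrbits (m : ℕ) (G : Subgroup (Equiv.Perm (Vtx m))) (n : ℕ) : ℕ :=
  Nat.card {s : Set (Vtx m) // ∃ v : Vtx m, v.length = n ∧ s = orbitSet m G v}

/-!
Writing `G_K` as the image of `H × K` under `(σ, k) ↦ (x :: u ↦ σ x :: k u)`, the preimage of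
`St(n + 1)` is `1 × St(n)`, so `|G_K : St_{G_K}(n + 1)| = |H| · |K : St_K(n)|`. Since
`W_H ∩ St(1)` is the product of `m` copies of `W_H` (through the first-level sections),
`|W_H : St(n + 1)| = |W_H : St(n)| ^ m · |H|`. With `w n = log|W_H : St(n)|`,
`k n = log|K : St_K(n)|` and `c = log|H|` this reads `w (n + 1) = m · w n + c`, and the ratio
`(c + k n) / w (n + 1)` of `G_K` at level `n + 1` differs from `(k n / w n) / m` by at most
`c / w (n + 1) ≤ 1 / (n + 1)`.
-/

namespace Subgroup

variable {G G' : Type*} [Group G] [Group G']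

theorem relIndex_pi {ι : Type*} [Fintype ι] (H : ι → Subgroup G) (K : Subgroup G) :
    (pi Set.univ H).relIndex (pi Set.univ fun _ : ι => K) = ∏ i, (H i).relIndex K := by
  have hmap : (⊤ : Subgroup (ι → K)).map (K.subtype.compLeft ι) = pi Set.univ fun _ => K := by
    ext g
    simp only [mem_map, mem_top, true_and, mem_pi, Set.mem_univ, forall_const]
    exact ⟨fun ⟨g', hg'⟩ i => hg' ▸ (g' i).2, fun hg => ⟨fun i => ⟨g i, hg i⟩, rfl⟩⟩
  have hcomap : (pi Set.univ H).comap (K.subtype.compLeft ι) =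
      pi Set.univ fun i => (H i).subgroupOf K := by
    ext g
    simp only [mem_comap, mem_pi, Set.mem_univ, forall_const, mem_subgroupOf]
    rfl
  rw [← hmap, ← relIndex_comap, hcomap, relIndex_top_right, index_pi]
  rfl

theorem relIndex_prod (H₁ K₁ : Subgroup G) (H₂ K₂ : Subgroup G') :
    (H₁.prod H₂).relIndex (K₁.prod K₂) = H₁.relIndex K₁ * H₂.relIndex K₂ := by
  have hmap : (⊤ : Subgroup (K₁ × K₂)).map (K₁.subtype.prodMap K₂.subtype) = K₁.prod K₂ := by
    rw [← MonoidHom.range_eq_map, MonoidHom.range_prodMap, range_subtype, range_subtype]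
  rw [← hmap, ← relIndex_comap, MonoidHom.prodMap_comap_prod, relIndex_top_right, index_prod]
  rfl

end Subgroup

section Tree

variable {m : ℕ} {H : Subgroup (Equiv.Perm (Fin m))} {f : Equiv.Perm (Vtx m)}

lemma mem_levelStab_iff {n : ℕ} : f ∈ levelStab m n ↔ ∀ v : Vtx m, v.length ≤ n → f v = v := by
  simp [levelStab, Subgroup.mem_iInf, MulAction.mem_stabilizer_iff, Equiv.Perm.smul_def]

lemma levelStab_anti {n n' : ℕ} (h : n ≤ n') : levelStab m n' ≤ levelStab m n :=
  fun _ hf => mem_levelStab_iff.mpr fun v hv => mem_levelStab_iff.mp hf v (hv.trans h)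

lemma mem_levelStab_zero_iff : f ∈ levelStab m 0 ↔ f [] = [] := by
  simp [mem_levelStab_iff]

lemma mem_levelStab_one_iff : f ∈ levelStab m 1 ↔ f [] = [] ∧ ∀ x, f [x] = [x] := by
  refine ⟨fun hf => ⟨mem_levelStab_iff.mp hf [] (by simp),
    fun x => mem_levelStab_iff.mp hf [x] (by simp)⟩, fun ⟨h0, h1⟩ => ?_⟩
  rw [mem_levelStab_iff]
  rintro (_ | ⟨x, _ | ⟨_, _⟩⟩) hv
  · exact h0
  · exact h1 x
  · simp at hv

lemma wreath_le_levelStab_zero : wreath m H ≤ levelStab m 0 :=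
  fun _ hf => mem_levelStab_zero_iff.mpr hf.1

lemma prefix_of_mem_wreath (hf : f ∈ wreath m H) (v u : Vtx m) : f v <+: f (v ++ u) := by
  induction u using List.reverseRecOn with
  | nil => simp
  | append_singleton u x ih =>
      obtain ⟨σ, -, h⟩ := hf.2 (v ++ u)
      rw [← List.append_assoc, h x]
      exact ih.trans (List.prefix_append _ _)

lemma cons_tail_of_mem_wreath (hf : f ∈ wreath m H) {x : Fin m} (hx : f [x] = [x])
    (u : Vtx m) : f (x :: u) = x :: (f (x :: u)).tail := by
  obtain ⟨w, hw⟩ := hx ▸ prefix_of_mem_wreath hf [x] u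
  simp [← show x :: w = f (x :: u) from hw]

lemma rootedPerm_mem_wreath {σ : Equiv.Perm (Fin m)} (hσ : σ ∈ H) :
    rootedPerm m σ ∈ wreath m H := by
  refine ⟨rfl, fun v => ?_⟩
  cases v with
  | nil => exact ⟨σ, hσ, fun _ => rfl⟩
  | cons _ _ => exact ⟨1, H.one_mem, fun _ => rfl⟩

end Tree

section RootPerm

variable {m : ℕ} {H : Subgroup (Equiv.Perm (Fin m))}

lemma exists_rootPerm {f : Equiv.Perm (Vtx m)} (hf : f ∈ wreath m H) :
    ∃ σ ∈ H, ∀ x, f [x] = [σ x] := by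
  obtain ⟨σ, hσ, h⟩ := hf.2 []
  exact ⟨σ, hσ, fun x => by simpa [hf.1] using h x⟩

noncomputable def rootPerm (f : wreath m H) : Equiv.Perm (Fin m) :=
  (exists_rootPerm f.2).choose

lemma rootPerm_mem (f : wreath m H) : rootPerm f ∈ H :=
  (exists_rootPerm f.2).choose_spec.1

lemma apply_singleton_eq_rootPerm (f : wreath m H) (x : Fin m) :
    (f : Equiv.Perm (Vtx m)) [x] = [rootPerm f x] :=
  (exists_rootPerm f.2).choose_spec.2 x

lemma rootPerm_eq_iff {f : wreath m H} {σ : Equiv.Perm (Fin m)} :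
    rootPerm f = σ ↔ ∀ x, (f : Equiv.Perm (Vtx m)) [x] = [σ x] := by
  simp only [apply_singleton_eq_rootPerm, List.cons.injEq, and_true, Equiv.ext_iff]

noncomputable def rootPermHom (m : ℕ) (H : Subgroup (Equiv.Perm (Fin m))) :
    wreath m H →* Equiv.Perm (Fin m) where
  toFun := rootPerm
  map_one' := rootPerm_eq_iff.mpr fun _ => rfl
  map_mul' f g := rootPerm_eq_iff.mpr fun x => by
    change (f : Equiv.Perm (Vtx m)) ((g : Equiv.Perm (Vtx m)) [x]) = _
    rw [apply_singleton_eq_rootPerm g, apply_singleton_eq_rootPerm f]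
    rfl

lemma ker_rootPermHom : (rootPermHom m H).ker = (levelStab m 1).subgroupOf (wreath m H) := by
  ext f
  rw [MonoidHom.mem_ker, Subgroup.mem_subgroupOf, mem_levelStab_one_iff]
  exact ⟨fun h => ⟨f.2.1, rootPerm_eq_iff.mp h⟩, fun h => rootPerm_eq_iff.mpr h.2⟩

lemma range_rootPermHom : (rootPermHom m H).range = H := by
  refine le_antisymm (fun _ ⟨f, hf⟩ => hf ▸ rootPerm_mem f) fun σ hσ => ?_
  exact ⟨⟨rootedPerm m σ, rootedPerm_mem_wreath hσ⟩, rootPerm_eq_iff.mpr fun _ => rfl⟩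

lemma relIndex_levelStab_one_wreath : (levelStab m 1).relIndex (wreath m H) = Nat.card H := by
  rw [Subgroup.relIndex, ← ker_rootPermHom, Subgroup.index_ker, range_rootPermHom]

end RootPerm

section Sections

variable {m : ℕ} {H : Subgroup (Equiv.Perm (Fin m))}

def ofSections (g : Fin m → Equiv.Perm (Vtx m)) : Equiv.Perm (Vtx m) where
  toFun
    | [] => []
    | x :: u => x :: g x u
  invFun
    | [] => []
    | x :: u => x :: (g x)⁻¹ u
  left_inv v := by cases v <;> simp
  right_inv v := by cases v <;> simp

@[simp] lemma ofSections_nil (g : Fin m → Equiv.Perm (Vtx m)) : ofSections g [] = [] := rfl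

@[simp] lemma ofSections_cons (g : Fin m → Equiv.Perm (Vtx m)) (x : Fin m) (u : Vtx m) :
    ofSections g (x :: u) = x :: g x u := rfl

def ofSectionsHom (m : ℕ) : (Fin m → Equiv.Perm (Vtx m)) →* Equiv.Perm (Vtx m) where
  toFun := ofSections
  map_one' := Equiv.ext fun v => by cases v <;> rfl
  map_mul' _ _ := Equiv.ext fun v => by cases v <;> rfl

@[simp] lemma ofSectionsHom_apply (g : Fin m → Equiv.Perm (Vtx m)) :
    ofSectionsHom m g = ofSections g := rfl

lemma ofSections_mem_wreath_iff {g : Fin m → Equiv.Perm (Vtx m)} :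
    ofSections g ∈ wreath m H ↔ ∀ x, g x ∈ wreath m H := by
  constructor
  · rintro ⟨-, hg⟩ x
    refine ⟨?_, fun v => ?_⟩
    · obtain ⟨σ, -, hσ⟩ := hg []
      exact (List.cons.inj (hσ x)).2
    · obtain ⟨σ, hσH, hσ⟩ := hg (x :: v)
      exact ⟨σ, hσH, fun a => (List.cons.inj (hσ a)).2⟩
  · refine fun hg => ⟨rfl, fun v => ?_⟩
    cases v with
    | nil => exact ⟨1, H.one_mem, fun x => by simp [(hg x).1]⟩
    | cons y w =>
      obtain ⟨σ, hσ, h⟩ := (hg y).2 w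
      exact ⟨σ, hσ, fun x => by simp [h x]⟩

lemma exists_ofSections_eq {f : Equiv.Perm (Vtx m)} (hf : f ∈ wreath m H ⊓ levelStab m 1) :
    ∃ g, ofSections g = f := by
  have hcons : ∀ f' ∈ wreath m H ⊓ levelStab m 1, ∀ x u, f' (x :: u) = x :: (f' (x :: u)).tail :=
    fun f' hf' x => cons_tail_of_mem_wreath hf'.1 ((mem_levelStab_one_iff.mp hf'.2).2 x)
  have hinv := (wreath m H ⊓ levelStab m 1).inv_mem hf
  refine ⟨fun x =>
    { toFun := fun u => (f (x :: u)).tail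
      invFun := fun u => (f⁻¹ (x :: u)).tail
      left_inv := fun u => ?_
      right_inv := fun u => ?_ }, Equiv.ext fun v => ?_⟩
  · change (f⁻¹ (x :: (f (x :: u)).tail)).tail = u
    rw [← hcons f hf, Equiv.Perm.coe_inv, Equiv.symm_apply_apply]
    rfl
  · change (f (x :: (f⁻¹ (x :: u)).tail)).tail = u
    rw [← hcons _ hinv, Equiv.Perm.coe_inv, Equiv.apply_symm_apply]
    rfl
  · cases v with
    | nil => exact (mem_levelStab_one_iff.mp hf.2).1.symm
    | cons x u => exact (hcons f hf x u).symm

lemma map_ofSectionsHom_pi_wreath :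
    (Subgroup.pi Set.univ fun _ : Fin m => wreath m H).map (ofSectionsHom m) =
      wreath m H ⊓ levelStab m 1 := by
  refine le_antisymm ?_ fun f hf => ?_
  · rintro _ ⟨g, hg, rfl⟩
    have hgW : ∀ x, g x ∈ wreath m H := fun x => hg x (Set.mem_univ x)
    exact ⟨ofSections_mem_wreath_iff.mpr hgW,
      mem_levelStab_one_iff.mpr ⟨rfl, fun x => by simp [(hgW x).1]⟩⟩
  · obtain ⟨g, rfl⟩ := exists_ofSections_eq hf
    exact ⟨g, fun x _ => ofSections_mem_wreath_iff.mp hf.1 x, rfl⟩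

lemma comap_ofSectionsHom_levelStab (n : ℕ) :
    (levelStab m (n + 1)).comap (ofSectionsHom m) =
      Subgroup.pi Set.univ fun _ : Fin m => levelStab m n := by
  ext g
  simp only [Subgroup.mem_comap, Subgroup.mem_pi, Set.mem_univ, forall_const, mem_levelStab_iff]
  refine ⟨fun h x u hu => ?_, fun h v hv => ?_⟩
  · simpa using h (x :: u) (by simpa using hu)
  · cases v with
    | nil => rfl
    | cons x u => simpa using h x u (by simpa using hv)

lemma relIndex_levelStab_zero_wreath : (levelStab m 0).relIndex (wreath m H) = 1 :=
  Subgroup.relIndex_eq_one.mpr wreath_le_levelStab_zero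

lemma relIndex_levelStab_succ_wreath (n : ℕ) :
    (levelStab m (n + 1)).relIndex (wreath m H) =
      (levelStab m n).relIndex (wreath m H) ^ m * Nat.card H := by
  have hle : levelStab m (n + 1) ⊓ levelStab m 1 = levelStab m (n + 1) :=
    inf_eq_left.mpr (levelStab_anti (by omega))
  rw [← hle, ← Subgroup.relIndex_inf_mul_relIndex, inf_comm (levelStab m 1),
    ← map_ofSectionsHom_pi_wreath, ← Subgroup.relIndex_comap, comap_ofSectionsHom_levelStab,
    Subgroup.relIndex_pi, relIndex_levelStab_one_wreath, Finset.prod_const, Finset.card_univ,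
    Fintype.card_fin]

lemma relIndex_levelStab_wreath_ne_zero (n : ℕ) : (levelStab m n).relIndex (wreath m H) ≠ 0 := by
  induction n with
  | zero => simp [relIndex_levelStab_zero_wreath]
  | succ n ih => simp [relIndex_levelStab_succ_wreath, ih, Nat.card_pos.ne']

end Sections

section Diagonal

variable {m : ℕ} {H : Subgroup (Equiv.Perm (Fin m))} {K : Subgroup (Equiv.Perm (Vtx m))}

def rootedDiag (σ : Equiv.Perm (Fin m)) (k : Equiv.Perm (Vtx m)) : Equiv.Perm (Vtx m) where
  toFun
    | [] => []
    | x :: u => σ x :: k u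
  invFun
    | [] => []
    | x :: u => σ⁻¹ x :: k⁻¹ u
  left_inv v := by cases v <;> simp
  right_inv v := by cases v <;> simp

@[simp] lemma rootedDiag_nil (σ : Equiv.Perm (Fin m)) (k : Equiv.Perm (Vtx m)) :
    rootedDiag σ k [] = [] := rfl

@[simp] lemma rootedDiag_cons (σ : Equiv.Perm (Fin m)) (k : Equiv.Perm (Vtx m)) (x : Fin m)
    (u : Vtx m) : rootedDiag σ k (x :: u) = σ x :: k u := rfl

lemma rootedDiag_eq_mul (σ : Equiv.Perm (Fin m)) (k : Equiv.Perm (Vtx m)) :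
    rootedDiag σ k = rootedPerm m σ * rootedDiag 1 k :=
  Equiv.ext fun v => by cases v <;> rfl

def rootedDiagHom (m : ℕ) : Equiv.Perm (Fin m) × Equiv.Perm (Vtx m) →* Equiv.Perm (Vtx m) where
  toFun p := rootedDiag p.1 p.2
  map_one' := Equiv.ext fun v => by cases v <;> rfl
  map_mul' _ _ := Equiv.ext fun v => by cases v <;> rfl

@[simp] lemma rootedDiagHom_apply (p : Equiv.Perm (Fin m) × Equiv.Perm (Vtx m)) :
    rootedDiagHom m p = rootedDiag p.1 p.2 := rfl

lemma diagGroup_eq_map : diagGroup m H K = (H.prod K).map (rootedDiagHom m) := by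
  refine le_antisymm (sup_le ?_ ?_) ?_
  · rintro _ ⟨σ, hσ, rfl⟩
    exact ⟨(σ, 1), ⟨hσ, K.one_mem⟩, Equiv.ext fun v => by cases v <;> rfl⟩
  · rintro f ⟨h0, k, hk, hf⟩
    refine ⟨(1, k), ⟨H.one_mem, hk⟩, Equiv.ext fun v => ?_⟩
    cases v with
    | nil => exact h0.symm
    | cons x u => exact (hf x u).symm
  · rintro _ ⟨⟨σ, k⟩, ⟨hσ, hk⟩, rfl⟩
    rw [rootedDiagHom_apply, rootedDiag_eq_mul]
    exact Subgroup.mul_mem _ (Subgroup.mem_sup_left ⟨σ, hσ, rfl⟩)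
      (Subgroup.mem_sup_right ⟨rfl, k, hk, fun _ _ => rfl⟩)

lemma comap_rootedDiagHom_levelStab (hm : 0 < m) (n : ℕ) :
    (levelStab m (n + 1)).comap (rootedDiagHom m) =
      (⊥ : Subgroup (Equiv.Perm (Fin m))).prod (levelStab m n) := by
  ext ⟨σ, k⟩
  simp only [Subgroup.mem_comap, Subgroup.mem_prod, Subgroup.mem_bot, mem_levelStab_iff,
    rootedDiagHom_apply]
  refine ⟨fun h => ⟨Equiv.ext fun x => ?_, fun u hu => ?_⟩, ?_⟩
  · exact (List.cons.inj (h [x] (by simp))).1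
  · exact (List.cons.inj (h (⟨0, hm⟩ :: u) (by simpa using hu))).2
  · rintro ⟨rfl, hk⟩ (_ | ⟨x, u⟩) hv
    · rfl
    · simp [hk u (by simpa using hv)]

lemma relIndex_levelStab_succ_diagGroup (hm : 0 < m) (n : ℕ) :
    (levelStab m (n + 1)).relIndex (diagGroup m H K) =
      Nat.card H * (levelStab m n).relIndex K := by
  rw [diagGroup_eq_map, ← Subgroup.relIndex_comap, comap_rootedDiagHom_levelStab hm,
    Subgroup.relIndex_prod, Subgroup.relIndex_bot_left]

lemma diagSub_le_levelStab_one (hK : K ≤ levelStab m 0) : diagSub m K ≤ levelStab m 1 := by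
  rintro f ⟨h0, k, hk, hf⟩
  exact mem_levelStab_one_iff.mpr ⟨h0, fun x => by rw [hf, mem_levelStab_zero_iff.mp (hK hk)]⟩

lemma diagGroup_inf_levelStab_one (hK : K ≤ levelStab m 0) :
    diagGroup m H K ⊓ levelStab m 1 = diagSub m K := by
  refine le_antisymm ?_ (le_inf le_sup_right (diagSub_le_levelStab_one hK))
  rintro _ ⟨hfG, hf1⟩
  rw [diagGroup_eq_map] at hfG
  obtain ⟨⟨σ, k⟩, ⟨-, hk⟩, rfl⟩ := hfG
  obtain rfl : σ = 1 := Equiv.ext fun x =>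
    (List.cons.inj ((mem_levelStab_one_iff.mp hf1).2 x)).1
  exact ⟨rfl, k, hk, fun _ _ => rfl⟩

end Diagonal

section Asymptotics

lemma Filter.liminf_eq_of_tendsto_sub {ι : Type*} {l : Filter ι} [l.NeBot] {u v : ι → ℝ}
    (hu : IsBoundedUnder (· ≤ ·) l u) (hu' : IsBoundedUnder (· ≥ ·) l u)
    (h : Tendsto (v - u) l (𝓝 0)) : liminf v l = liminf u l := by
  rw [show v = (v - u) + u from (sub_add_cancel v u).symm]
  refine le_antisymm ?_ ?_
  · calc liminf ((v - u) + u) l ≤ limsup (v - u) l + liminf u l :=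
          liminf_add_le h.isBoundedUnder_ge h.isBoundedUnder_le hu' hu.isCoboundedUnder_ge
      _ = liminf u l := by rw [h.limsup_eq, zero_add]
  · calc liminf u l = liminf (v - u) l + liminf u l := by rw [h.liminf_eq, zero_add]
      _ ≤ liminf ((v - u) + u) l :=
          le_liminf_add h.isBoundedUnder_ge h.isBoundedUnder_le hu'
            hu.isCoboundedUnder_ge

variable {a r : ℕ → ℝ} {m : ℝ}

lemma liminf_eq_liminf_div_of_tendsto_succ_sub (hm : 0 < m)
    (hr : IsBoundedUnder (· ≤ ·) atTop r) (hr' : IsBoundedUnder (· ≥ ·) atTop r)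
    (h : Tendsto (fun n => a (n + 1) - r n / m) atTop (𝓝 0)) :
    liminf a atTop = liminf r atTop / m := by
  have hdiv : Monotone fun x : ℝ => x / m := fun _ _ hxy => div_le_div_of_nonneg_right hxy hm.le
  rw [← liminf_nat_add a 1, Filter.liminf_eq_of_tendsto_sub (u := fun n => r n / m)
    (hdiv.isBoundedUnder_le_comp hr) (hdiv.isBoundedUnder_ge_comp hr') h]
  exact (hdiv.map_liminf_of_continuousAt r (continuous_id.div_const m).continuousAt
    hr.isCoboundedUnder_ge hr').symm

lemma tendsto_div_of_tendsto_succ_sub {d : ℝ} (hr : Tendsto r atTop (𝓝 d))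
    (h : Tendsto (fun n => a (n + 1) - r n / m) atTop (𝓝 0)) :
    Tendsto a atTop (𝓝 (d / m)) := by
  refine (tendsto_add_atTop_iff_nat 1).mp ?_
  simpa using (hr.div_const m).add h

lemma abs_add_div_sub_div_le {c b : ℝ} (hc : 0 < c) (hm : 1 ≤ m) {k : ℝ} (hk : 0 ≤ k)
    (hkb : k ≤ b) : |(c + k) / (m * b + c) - k / b / m| ≤ c / (m * b + c) := by
  rcases (hk.trans hkb).eq_or_lt with rfl | hb
  · obtain rfl : k = 0 := le_antisymm hkb hk
    simp [hc.ne']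
  have hmb : 0 < m * b := by positivity
  have hkmb : k / (m * b) ≤ 1 := div_le_one_of_le₀ (by nlinarith) hmb.le
  have hsplit : (c + k) / (m * b + c) - k / b / m = c / (m * b + c) * (1 - k / (m * b)) := by
    field_simp
    ring
  have hkmb₀ : 0 ≤ k / (m * b) := div_nonneg hk hmb.le
  rw [hsplit, abs_of_nonneg (mul_nonneg (by positivity) (by linarith))]
  exact mul_le_of_le_one_right (by positivity) (by linarith)

lemma tendsto_ratio_succ_sub {c : ℝ} {w k g : ℕ → ℝ} (hc : 0 < c) (hm : 1 ≤ m) (hw₀ : w 0 = 0)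
    (hw : ∀ n, w (n + 1) = m * w n + c) (hk : ∀ n, 0 ≤ k n) (hkw : ∀ n, k n ≤ w n)
    (hg : ∀ n, g (n + 1) = c + k n) :
    Tendsto (fun n => g (n + 1) / w (n + 1) - k n / w n / m) atTop (𝓝 0) := by
  have hlin : ∀ n : ℕ, n * c ≤ w n := by
    intro n
    induction n with
    | zero => simp [hw₀]
    | succ n ih => push_cast; nlinarith [hw n, hk n, hkw n]
  refine squeeze_zero_norm (fun n => ?_) tendsto_one_div_add_atTop_nhds_zero_nat
  have hpos : 0 < m * w n + c := by nlinarith [hk n, hkw n]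
  rw [Real.norm_eq_abs, hg, hw]
  calc _ ≤ c / (m * w n + c) := abs_add_div_sub_div_le hc hm (hk n) (hkw n)
    _ ≤ 1 / (n + 1) := by
        have := hlin (n + 1)
        push_cast at this
        rw [div_le_div_iff₀ hpos (by positivity)]
        linarith [hw n]

end Asymptotics

section LogIndex

variable {m : ℕ} {H : Subgroup (Equiv.Perm (Fin m))} {K : Subgroup (Equiv.Perm (Vtx m))}

lemma one_lt_card_of_transitive (hm : 2 ≤ m) (hH : ∀ x y : Fin m, ∃ σ ∈ H, σ x = y) :
    1 < Nat.card H := by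
  obtain ⟨σ, hσ, hσ01⟩ := hH ⟨0, by omega⟩ ⟨1, by omega⟩
  refine H.one_lt_card_iff_ne_bot.mpr fun hbot => ?_
  rw [hbot, Subgroup.mem_bot] at hσ
  simp [hσ, Fin.ext_iff] at hσ01

lemma relIndex_levelStab_ne_zero_of_le_wreath (hKW : K ≤ wreath m H) (n : ℕ) :
    (levelStab m n).relIndex K ≠ 0 :=
  fun h => relIndex_levelStab_wreath_ne_zero n (Subgroup.relIndex_eq_zero_of_le_right hKW h)

lemma log_relIndex_levelStab_le_wreath (hKW : K ≤ wreath m H) (n : ℕ) :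
    Real.log ((levelStab m n).relIndex K) ≤ Real.log ((levelStab m n).relIndex (wreath m H)) :=
  Real.log_le_log
    (by simpa [Nat.pos_iff_ne_zero] using relIndex_levelStab_ne_zero_of_le_wreath hKW n)
    (by exact_mod_cast Subgroup.relIndex_le_of_le_right hKW (relIndex_levelStab_wreath_ne_zero n))

lemma log_relIndex_levelStab_succ_wreath (n : ℕ) :
    Real.log ((levelStab m (n + 1)).relIndex (wreath m H)) =
      m * Real.log ((levelStab m n).relIndex (wreath m H)) + Real.log (Nat.card H) := by
  rw [relIndex_levelStab_succ_wreath, Nat.cast_mul, Nat.cast_pow,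
    Real.log_mul (by simp [relIndex_levelStab_wreath_ne_zero]) (by simp [Nat.card_pos.ne']),
    Real.log_pow]

lemma log_relIndex_levelStab_succ_diagGroup (hm : 0 < m) (hKW : K ≤ wreath m H) (n : ℕ) :
    Real.log ((levelStab m (n + 1)).relIndex (diagGroup m H K)) =
      Real.log (Nat.card H) + Real.log ((levelStab m n).relIndex K) := by
  rw [relIndex_levelStab_succ_diagGroup hm, Nat.cast_mul,
    Real.log_mul (by simp [Nat.card_pos.ne'])
      (by simpa using relIndex_levelStab_ne_zero_of_le_wreath hKW n)]

end LogIndex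

theorem statement12_general (m : ℕ) (hm : 2 ≤ m) (H : Subgroup (Equiv.Perm (Fin m)))
    (hHtrans : ∀ x y : Fin m, ∃ σ ∈ H, σ x = y)
    (K : Subgroup (Equiv.Perm (Vtx m))) (hKW : K ≤ wreath m H) :
    diagGroup m H K ⊓ levelStab m 1 = diagSub m K ∧
    (∀ n : ℕ, 1 ≤ n → (levelStab m n).relIndex (diagGroup m H K) =
      Nat.card ↥H * (levelStab m (n - 1)).relIndex K) ∧
    hdimIn m (wreath m H) (diagGroup m H K) = hdimIn m (wreath m H) K / m ∧
    (∀ d : ℝ, hasStrongHdim m (wreath m H) K d →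
      hasStrongHdim m (wreath m H) (diagGroup m H K) (d / m)) := by
  set w : ℕ → ℝ := fun n => Real.log ((levelStab m n).relIndex (wreath m H))
  set k : ℕ → ℝ := fun n => Real.log ((levelStab m n).relIndex K)
  set g : ℕ → ℝ := fun n => Real.log ((levelStab m n).relIndex (diagGroup m H K))
  have hk₀ (n : ℕ) : 0 ≤ k n := Real.log_natCast_nonneg _
  have hkw (n : ℕ) : k n ≤ w n := log_relIndex_levelStab_le_wreath hKW n
  have hratio := tendsto_ratio_succ_sub (m := m) (w := w) (k := k) (g := g)
    (Real.log_pos (by exact_mod_cast one_lt_card_of_transitive hm hHtrans))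
    (by exact_mod_cast (by omega : 1 ≤ m)) (by simp [w, relIndex_levelStab_zero_wreath])
    log_relIndex_levelStab_succ_wreath hk₀ hkw
    (log_relIndex_levelStab_succ_diagGroup (by omega) hKW)
  refine ⟨diagGroup_inf_levelStab_one (hKW.trans wreath_le_levelStab_zero), fun n hn => ?_,
    liminf_eq_liminf_div_of_tendsto_succ_sub (by positivity)
      (isBoundedUnder_of ⟨1, fun n => div_le_one_of_le₀ (hkw n) ((hk₀ n).trans (hkw n))⟩)
      (isBoundedUnder_of ⟨0, fun n => div_nonneg (hk₀ n) ((hk₀ n).trans (hkw n))⟩) hratio,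
    fun d hd => tendsto_div_of_tendsto_succ_sub hd hratio⟩
  obtain ⟨n, rfl⟩ := Nat.exists_eq_add_of_le' hn
  exact relIndex_levelStab_succ_diagGroup (by omega) n

/-- For `G_K = ⟨H, D_m(K)⟩` one has `St_{G_K}(1) = D_m(K)` and, for
every `n ≥ 1`, `|G_K : St_{G_K}(n)| = |H| · |K : St_K(n-1)|` (the logarithmic identity
`log|G_K : St_{G_K}(n)| = log|H| + log|K : St_K(n−1)|`).  Consequently
`hdim_{W_H}(G_K) = hdim_{W_H}(K)/m`, and if `K` has strong Hausdorff dimension in `W_H`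
then so does `G_K`. -/
theorem statement12 (m : ℕ) (hm : 2 ≤ m) (H : Subgroup (Equiv.Perm (Fin m)))
    (hHtrans : ∀ x y : Fin m, ∃ σ ∈ H, σ x = y)
    (K : Subgroup (Equiv.Perm (Vtx m))) (hKW : K ≤ wreath m H) (hKcl : IsTreeClosed m K) :
    diagGroup m H K ⊓ levelStab m 1 = diagSub m K ∧
    (∀ n : ℕ, 1 ≤ n → (levelStab m n).relIndex (diagGroup m H K) =
      Nat.card ↥H * (levelStab m (n - 1)).relIndex K) ∧
    hdimIn m (wreath m H) (diagGroup m H K) = hdimIn m (wreath m H) K / m ∧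
    (∀ d : ℝ, hasStrongHdim m (wreath m H) K d →
      hasStrongHdim m (wreath m H) (diagGroup m H K) (d / m)) :=
  statement12_general m hm H hHtrans K hKW
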